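/- The module M_{Y,d} of norm-limits of finite-propagation operators from ℓ²(X) to ℓ²(Y), equipped with the right action T·a = Ta for a ∈ C*_u(X) and inner product ⟨S,T⟩ = S*T, is a Hilbert C*-module over C*_u(X). -/

import Mathlib

noncomputable section

/-- `ℓ²(X)`. -/
abbrev H (X : Type) := lp (fun _ : X => ℂ) 2

/-- The delta function `δ_x`. -/
def delta {X : Type} (x : X) : H X :=
  letI := Classical.decEq X
  lp.single 2 x 1

/-- Matrix entry `⟨δ_y, T δ_x⟩` of an operator. -/
def entry {X Y : Type} (T : H X →L[ℂ] H Y) (y : Y) (x : X) : ℂ := (T (delta x)) y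

/-- `d` is a metric on `Z`. -/
structure IsMetric {Z : Type} (d : Z → Z → ℝ) : Prop where
  self : ∀ p, d p p = 0
  eq_of : ∀ p q, d p q = 0 → p = q
  symm : ∀ p q, d p q = d q p
  triangle : ∀ p q r, d p r ≤ d p q + d q r

/-! By the matrix formula `(TS)_{zx} = ∑_y T_{zy} S_{yx}` and the triangle inequality for `d`,
propagation bounds add under composition, and taking adjoints transposes the matrix; as
composition and adjoint are continuous, both facts pass to norm closures. The remaining axioms
are the C*-identity `‖T*T‖ = ‖T‖²` and the positivity of `T*T` on Hilbert space. -/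

open scoped InnerProductSpace
open ContinuousLinearMap

lemma inner_delta_left {X : Type} (x : X) (f : H X) : ⟪delta x, f⟫_ℂ = f x := by
  classical
  rw [delta, lp.inner_single_left]
  simp [RCLike.inner_apply]

lemma entry_adjoint {X Y : Type} (T : H X →L[ℂ] H Y) (x : X) (y : Y) :
    entry (adjoint T) x y = starRingEnd ℂ (entry T y x) := by
  rw [entry, ← inner_delta_left, adjoint_inner_right, ← inner_conj_symm, inner_delta_left]
  rfl

lemma apply_eq_tsum_entry_mul {X Y : Type} (T : H X →L[ℂ] H Y) (v : H X) (y : Y) :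
    T v y = ∑' x, entry T y x * v x := by
  rw [← inner_delta_left, ← adjoint_inner_left, lp.inner_eq_tsum]
  refine tsum_congr fun x => ?_
  rw [RCLike.inner_apply, ← entry, entry_adjoint, RingHomCompTriple.comp_apply,
    RingHom.id_apply, mul_comm]

lemma entry_comp {X Y Z : Type} (T : H Y →L[ℂ] H Z) (S : H X →L[ℂ] H Y) (z : Z) (x : X) :
    entry (T.comp S) z x = ∑' y, entry T z y * entry S y x :=
  apply_eq_tsum_entry_mul T (S (delta x)) z

def finitePropagation {X Y : Type} (ρ : X → Y → ℝ) : Set (H X →L[ℂ] H Y) :=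
  {T | ∃ L : ℝ, ∀ x y, L ≤ ρ x y → entry T y x = 0}

section FinitePropagation

variable {X Y Z : Type} {ρ : X → Y → ℝ} {ρ₁ : X → Y → ℝ} {ρ₂ : Y → Z → ℝ} {ρ₃ : X → Z → ℝ}

lemma adjoint_mem_finitePropagation {T : H X →L[ℂ] H Y} (hT : T ∈ finitePropagation ρ) :
    adjoint T ∈ finitePropagation (fun y x => ρ x y) := by
  obtain ⟨L, hL⟩ := hT
  exact ⟨L, fun y x h => by rw [entry_adjoint, hL x y h, map_zero]⟩

lemma comp_mem_finitePropagation (hρ : ∀ x y z, ρ₃ x z ≤ ρ₁ x y + ρ₂ y z)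
    {T : H Y →L[ℂ] H Z} {S : H X →L[ℂ] H Y}
    (hT : T ∈ finitePropagation ρ₂) (hS : S ∈ finitePropagation ρ₁) :
    T.comp S ∈ finitePropagation ρ₃ := by
  obtain ⟨L₂, hL₂⟩ := hT
  obtain ⟨L₁, hL₁⟩ := hS
  refine ⟨L₁ + L₂, fun x z hxz => ?_⟩
  have h_term : ∀ y, entry T z y * entry S y x = 0 := fun y => by
    by_cases hxy : L₁ ≤ ρ₁ x y
    · rw [hL₁ x y hxy, mul_zero]
    · rw [hL₂ y z (by linarith [hρ x y z]), zero_mul]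
  rw [entry_comp, tsum_congr h_term, tsum_zero]

lemma adjoint_mem_closure_finitePropagation {T : H X →L[ℂ] H Y}
    (hT : T ∈ closure (finitePropagation ρ)) :
    adjoint T ∈ closure (finitePropagation (fun y x => ρ x y)) :=
  map_mem_closure (adjoint (E := H X) (F := H Y) (𝕜 := ℂ)).continuous hT
    fun _ => adjoint_mem_finitePropagation

lemma comp_mem_closure_finitePropagation (hρ : ∀ x y z, ρ₃ x z ≤ ρ₁ x y + ρ₂ y z)
    {T : H Y →L[ℂ] H Z} {S : H X →L[ℂ] H Y}
    (hT : T ∈ closure (finitePropagation ρ₂)) (hS : S ∈ closure (finitePropagation ρ₁)) :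
    T.comp S ∈ closure (finitePropagation ρ₃) :=
  map_mem_closure₂ isBoundedBilinearMap_comp.continuous hT hS
    fun _ hT _ hS => comp_mem_finitePropagation hρ hT hS

end FinitePropagation

open ContinuousLinearMap in
/-- `M_{Y,d}`, the norm closure of the finite-propagation operators
`ℓ²(X) → ℓ²(Y)`, with right action `T·a = Ta` by elements `a` of the uniform Roe algebra
`C*_u(X)` and inner product `⟨S,T⟩ = S*T`, is a Hilbert C*-module over `C*_u(X)`. -/
theorem stmt_8 {X Y : Type} [MetricSpace X]
    (d : X ⊕ Y → X ⊕ Y → ℝ) (hd : IsMetric d)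
    (hext : ∀ x x' : X, d (Sum.inl x) (Sum.inl x') = dist x x')
    (M : Set (H X →L[ℂ] H Y))
    (hM : M = closure {T | ∃ L : ℝ, ∀ (x : X) (y : Y),
        L ≤ d (Sum.inl x) (Sum.inr y) → entry T y x = 0})
    (A : Set (H X →L[ℂ] H X))
    (hA : A = closure {R | ∃ L : ℝ, ∀ x x' : X, L ≤ dist x x' → entry R x' x = 0}) :
    -- M is a right A-module
    (∀ T ∈ M, ∀ a ∈ A, T.comp a ∈ M) ∧
    -- the inner product takes values in A
    (∀ S ∈ M, ∀ T ∈ M, (adjoint S).comp T ∈ A) ∧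
    -- A-linearity in the second variable
    (∀ (S T : H X →L[ℂ] H Y) (a : H X →L[ℂ] H X),
      (adjoint S).comp (T.comp a) = ((adjoint S).comp T).comp a) ∧
    -- hermitian symmetry
    (∀ S T : H X →L[ℂ] H Y, star ((adjoint S).comp T) = (adjoint T).comp S) ∧
    -- positivity
    (∀ T : H X →L[ℂ] H Y, ((adjoint T).comp T).IsPositive) ∧
    -- definiteness
    (∀ T : H X →L[ℂ] H Y, (adjoint T).comp T = 0 → T = 0) ∧
    -- compatibility of norms
    (∀ T : H X →L[ℂ] H Y, ‖T‖ ^ 2 = ‖(adjoint T).comp T‖) ∧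
    -- completeness
    IsClosed M := by
  subst hM hA
  have h_module : ∀ x x' y, d (.inl x) (.inr y) ≤ dist x x' + d (.inl x') (.inr y) :=
    fun x x' y => hext x x' ▸ hd.triangle _ _ _
  have h_inner : ∀ x y x', dist x x' ≤ d (.inl x) (.inr y) + d (.inl x') (.inr y) :=
    fun x y x' => hext x x' ▸ hd.symm (.inr y) (.inl x') ▸ hd.triangle _ _ _
  refine ⟨fun T hT a ha => comp_mem_closure_finitePropagation h_module hT ha,
    fun S hS T hT => comp_mem_closure_finitePropagation h_inner
      (adjoint_mem_closure_finitePropagation hS) hT,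
    fun _ _ _ => rfl, fun S T => ?_, isPositive_adjoint_comp_self,
    fun _ => adjoint_comp_self_eq_zero_iff.mp, fun T => ?_, isClosed_closure⟩
  · rw [star_eq_adjoint, adjoint_comp, adjoint_adjoint]
  · rw [sq, norm_adjoint_comp_self]
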